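/- Let L be the Schrödinger-Virasoro algebra, V = L⊗L with adjoint diagonal action, and D the 6-dimensional space of derivations defined by D(L_n) = (nα+γ)M_0⊗M_n + (nα†+γ†)M_n⊗M_0, D(Y_{n−1/2}) = βM_0⊗Y_{n−1/2} + β†Y_{n−1/2}⊗M_0, D(M_n) = 2(βM_0⊗M_n + β†M_n⊗M_0). Then Inn(L,V) ∩ D = {0}: no nonzero element of D is an inner derivation. -/

import Mathlib

open TensorProduct

/-- Index set for the basis of the Schrödinger–Virasoro algebra:
`Sum.inl n ↔ L_n`, `Sum.inr (Sum.inl n) ↔ Y_{n+1/2}`, `Sum.inr (Sum.inr n) ↔ M_n`. -/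
abbrev SVIx : Type := ℤ ⊕ ℤ ⊕ ℤ

variable (F : Type) [Field F] [CharZero F]

/-- Underlying space of the Schrödinger–Virasoro algebra: the free `F`-module on `SVIx`. -/
abbrev SVL := SVIx →₀ F

noncomputable def Lb (n : ℤ) : SVL F := Finsupp.single (Sum.inl n) 1
noncomputable def Yb (n : ℤ) : SVL F := Finsupp.single (Sum.inr (Sum.inl n)) 1
noncomputable def Mb (n : ℤ) : SVL F := Finsupp.single (Sum.inr (Sum.inr n)) 1

/-- The bracket of basis vectors.  Here `Yb n` stands for `Y_{n+1/2}`, so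
`[L_m, Y_{n+1/2}] = ((n+1/2) - m/2) Y_{m+n+1/2}` and
`[Y_{a+1/2}, Y_{b+1/2}] = (b-a) M_{a+b+1}`; all other brackets vanish. -/
noncomputable def brIx : SVIx → SVIx → SVL F
  | Sum.inl m, Sum.inl n => ((n - m : ℤ) : F) • Lb F (m + n)
  | Sum.inl m, Sum.inr (Sum.inl n) => (((2*n + 1 - m : ℤ) : F) / 2) • Yb F (m + n)
  | Sum.inl m, Sum.inr (Sum.inr n) => ((n : ℤ) : F) • Mb F (m + n)
  | Sum.inr (Sum.inl n), Sum.inl m => -((((2*n + 1 - m : ℤ) : F) / 2) • Yb F (m + n))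
  | Sum.inr (Sum.inl a), Sum.inr (Sum.inl b) => ((b - a : ℤ) : F) • Mb F (a + b + 1)
  | Sum.inr (Sum.inr n), Sum.inl m => -(((n : ℤ) : F) • Mb F (m + n))
  | _, _ => 0

/-- The bracket of the Schrödinger–Virasoro algebra: the bilinear extension of `brIx`. -/
noncomputable def bk : SVL F →ₗ[F] SVL F →ₗ[F] SVL F :=
  Finsupp.lsum F fun i => LinearMap.toSpanSingleton F (SVL F →ₗ[F] SVL F)
    (Finsupp.lsum F fun j => LinearMap.toSpanSingleton F (SVL F) (brIx F i j))

abbrev VV := SVL F ⊗[F] SVL F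

noncomputable instance : AddCommGroup (VV F) := inferInstance

noncomputable instance : Zero (VV F) :=
  ((inferInstanceAs (AddCommMonoid (VV F)) : AddCommMonoid (VV F))).toAddMonoid.toZero

/-- The adjoint diagonal action of `L` on `L ⊗ L`, as a bilinear map:
`x · (a ⊗ b) = [x,a] ⊗ b + a ⊗ [x,b]`. -/
noncomputable def adVb : SVL F →ₗ[F] VV F →ₗ[F] VV F :=
  ((LinearMap.rTensorHom (SVL F) : (SVL F →ₗ[F] SVL F) →ₗ[F] (VV F →ₗ[F] VV F)) ∘ₗ bk F)
    + ((LinearMap.lTensorHom (SVL F) : (SVL F →ₗ[F] SVL F) →ₗ[F] (VV F →ₗ[F] VV F)) ∘ₗ bk F)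

/-- The twist map `τ(x ⊗ y) = y ⊗ x`. -/
noncomputable def tau : VV F →ₗ[F] VV F := (TensorProduct.comm F (SVL F) (SVL F)).toLinearMap

/-- The map `1 - τ`. -/
noncomputable def oneMinusTau : VV F →ₗ[F] VV F where
  toFun v := v - tau F v
  map_add' x y := by
    simp only [map_add]; exact sub_add_sub_comm x (tau F x) y (tau F y) ▸ rfl
  map_smul' c x := by simp only [map_smul, RingHom.id_apply, smul_sub]

/-- `Im (1 - τ) ⊂ L ⊗ L`. -/
noncomputable def skewIm : Submodule F (VV F) := LinearMap.range (oneMinusTau F)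
/-- Values on basis elements of the special derivations `D` with parameters
`(α, α†, β, β†, γ, γ†)`:  `D(L_n) = (nα+γ) M₀⊗M_n + (nα†+γ†) M_n⊗M₀`,
`D(Y_{n+1/2}) = β M₀⊗Y_{n+1/2} + β† Y_{n+1/2}⊗M₀`, `D(M_n) = 2(β M₀⊗M_n + β† M_n⊗M₀)`. -/
noncomputable def dval (a a' b b' c c' : F) : SVIx → VV F
  | Sum.inl n => (((n : ℤ) : F) * a + c) • (Mb F 0 ⊗ₜ[F] Mb F n)
      + (((n : ℤ) : F) * a' + c') • (Mb F n ⊗ₜ[F] Mb F 0)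
  | Sum.inr (Sum.inl n) => b • (Mb F 0 ⊗ₜ[F] Yb F n) + b' • (Yb F n ⊗ₜ[F] Mb F 0)
  | Sum.inr (Sum.inr n) => (2 * b) • (Mb F 0 ⊗ₜ[F] Mb F n) + (2 * b') • (Mb F n ⊗ₜ[F] Mb F 0)

/-- The special derivation with parameters `(α, α†, β, β†, γ, γ†)`. -/
noncomputable def Dmap (a a' b b' c c' : F) : SVL F →ₗ[F] VV F :=
  Finsupp.lsum F fun i => LinearMap.toSpanSingleton F (VV F) (dval F a a' b b' c c' i)

/-- `D` is a derivation from `L` to the `L`-module `L ⊗ L`. -/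
def IsDer (D : SVL F →ₗ[F] VV F) : Prop :=
  ∀ x y : SVL F, D (bk F x y) = adVb F x (D y) - adVb F y (D x)


/-! Suppose `D = v · (-)` for some `v ∈ L ⊗ L`. Comparing the coefficients of `M₀ ⊗ Mₙ` in
`D(Lₙ) = Lₙ · v` and `D(Mₙ) = Mₙ · v` gives `nα + γ = -n v(M₋ₙ, Mₙ)` and
`2β = -n v(L₋ₙ, Mₙ) - n v(M₀, L₀)`. As `v` has finite support, for all but finitely many `n`
these read `nα + γ = 0` and `n v(M₀, L₀) + 2β = 0`, which forces `α = β = γ = 0`. The flip `τ`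
commutes with the action and exchanges each parameter with its dagger, which gives
`α† = β† = γ† = 0`. -/

open Function Filter

lemma Finsupp.apply_eq_mul_apply_of_single {R α β : Type*} [CommSemiring R]
    {f : (α →₀ R) →ₗ[R] (β →₀ R)} {k : β} {k' : α} {e : R}
    (h : ∀ j, f (Finsupp.single j 1) k = e * (Finsupp.single j 1 : α →₀ R) k') (y : α →₀ R) :
    f y k = e * y k' := by
  induction y using Finsupp.induction_linear with
  | zero => simp
  | add y z hy hz => simp [hy, hz, mul_add]
  | single j t =>
    rw [← Finsupp.smul_single_one, map_smul, Finsupp.smul_apply, Finsupp.smul_apply, h,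
      smul_eq_mul, smul_eq_mul, mul_left_comm]

section TensorCoeff

variable {R α α' β β' ι : Type*} [CommSemiring R]

noncomputable def tensorCoeff (i : α) (j : β) : (α →₀ R) ⊗[R] (β →₀ R) →ₗ[R] R :=
  Finsupp.lapply (i, j) ∘ₗ (finsuppTensorFinsupp' R α β).toLinearMap

@[simp]
lemma tensorCoeff_tmul (i : α) (j : β) (x : α →₀ R) (y : β →₀ R) :
    tensorCoeff i j (x ⊗ₜ[R] y) = x i * y j := by
  simp [tensorCoeff, finsuppTensorFinsupp'_apply_apply]

lemma tensorCoeff_rTensor {g : (α →₀ R) →ₗ[R] (α' →₀ R)} {i : α'} {i' : α} {e : R}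
    (hg : ∀ x, g x i = e * x i') (j : β) (v : (α →₀ R) ⊗[R] (β →₀ R)) :
    tensorCoeff i j (g.rTensor _ v) = e * tensorCoeff i' j v := by
  induction v using TensorProduct.induction_on with
  | zero => simp
  | tmul x y => simp [hg, mul_assoc]
  | add x y hx hy => simp [hx, hy, mul_add]

lemma tensorCoeff_lTensor {g : (β →₀ R) →ₗ[R] (β' →₀ R)} {j : β'} {j' : β} {e : R}
    (hg : ∀ y, g y j = e * y j') (i : α) (v : (α →₀ R) ⊗[R] (β →₀ R)) :
    tensorCoeff i j (g.lTensor _ v) = e * tensorCoeff i j' v := by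
  induction v using TensorProduct.induction_on with
  | zero => simp
  | tmul x y => simp [hg, mul_left_comm]
  | add x y hx hy => simp [hx, hy, mul_add]

lemma eventually_tensorCoeff_eq_zero {p : ι → α × β} (hp : Injective p)
    (v : (α →₀ R) ⊗[R] (β →₀ R)) :
    ∀ᶠ k in cofinite, tensorCoeff (p k).1 (p k).2 v = 0 := by
  refine eventually_cofinite.2 ?_
  convert (finsuppTensorFinsupp' R α β v).support.finite_toSet.preimage hp.injOn using 1
  ext k
  simp [tensorCoeff]

end TensorCoeff

lemma eq_zero_of_eventually_intCast_mul_add_eq_zero {R : Type*} [CommRing R] [IsDomain R]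
    [CharZero R] {a c : R} (h : ∀ᶠ n : ℤ in cofinite, (n : R) * a + c = 0) :
    a = 0 ∧ c = 0 := by
  obtain ⟨m, hm⟩ := h.exists
  obtain ⟨n, hn, hnm⟩ := (h.and (eventually_cofinite_ne m)).exists
  have hsub : ((n : R) - m) * a = 0 := by linear_combination hn - hm
  have ha : a = 0 := (mul_eq_zero.1 hsub).resolve_left (sub_ne_zero.2 (by exact_mod_cast hnm))
  exact ⟨ha, by simpa [ha] using hm⟩

abbrev ixL (n : ℤ) : SVIx := Sum.inl n
abbrev ixM (n : ℤ) : SVIx := Sum.inr (Sum.inr n)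

section SchrodingerVirasoro

variable (K : Type) [Field K]

lemma bk_single (i j : SVIx) (s t : K) :
    bk K (Finsupp.single i s) (Finsupp.single j t) = (s * t) • brIx K i j := by
  simp [bk, LinearMap.toSpanSingleton_apply, mul_smul]

lemma bk_Lb_apply_ixM_zero (n : ℤ) : ∀ y : SVL K, bk K (Lb K n) y (ixM 0) = -n * y (ixM (-n)) :=
  Finsupp.apply_eq_mul_apply_of_single fun j => by
    rcases j with m | m | m <;> simp [Lb, Yb, Mb, bk_single, brIx, Finsupp.single_apply]
    split_ifs <;> first | rfl | omega | (obtain rfl : m = -n := (by omega); simp)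

lemma bk_Lb_apply_ixM_self (n : ℤ) (y : SVL K) : bk K (Lb K n) y (ixM n) = 0 := by
  have h : ∀ j, bk K (Lb K n) (Finsupp.single j 1) (ixM n) = 0 := fun j => by
    rcases j with m | m | m <;> simp [Lb, Yb, Mb, bk_single, brIx, Finsupp.single_apply]
    rintro rfl
    simp
  simpa using Finsupp.apply_eq_mul_apply_of_single (e := 0) (k' := ixM n) (by simpa using h) y

lemma bk_Mb_apply_ixM_zero (n : ℤ) : ∀ y : SVL K, bk K (Mb K n) y (ixM 0) = -n * y (ixL (-n)) :=
  Finsupp.apply_eq_mul_apply_of_single fun j => by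
    rcases j with m | m | m <;> simp [Mb, bk_single, brIx, Finsupp.single_apply]
    split_ifs <;> first | omega | simp

lemma bk_Mb_apply_ixM_self (n : ℤ) : ∀ y : SVL K, bk K (Mb K n) y (ixM n) = -n * y (ixL 0) :=
  Finsupp.apply_eq_mul_apply_of_single fun j => by
    rcases j with m | m | m <;> simp [Mb, bk_single, brIx, Finsupp.single_apply]
    split_ifs <;> simp

lemma adVb_apply (x : SVL K) (v : VV K) :
    adVb K x v = (bk K x).rTensor _ v + (bk K x).lTensor _ v := by
  simp [adVb, LinearMap.rTensorHom, LinearMap.lTensorHom]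

lemma tensorCoeff_adVb_Lb (n : ℤ) (v : VV K) :
    tensorCoeff (ixM 0) (ixM n) (adVb K (Lb K n) v)
      = -n * tensorCoeff (ixM (-n)) (ixM n) v := by
  rw [adVb_apply, map_add, tensorCoeff_rTensor (bk_Lb_apply_ixM_zero K n),
    tensorCoeff_lTensor (j' := ixM n) (e := 0) (by simp [bk_Lb_apply_ixM_self]), zero_mul,
    add_zero]

lemma tensorCoeff_adVb_Mb (n : ℤ) (v : VV K) :
    tensorCoeff (ixM 0) (ixM n) (adVb K (Mb K n) v)
      = -n * tensorCoeff (ixL (-n)) (ixM n) v + -n * tensorCoeff (ixM 0) (ixL 0) v := by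
  rw [adVb_apply, map_add, tensorCoeff_rTensor (bk_Mb_apply_ixM_zero K n),
    tensorCoeff_lTensor (bk_Mb_apply_ixM_self K n)]

variable {a a' b b' c c' : K}

lemma Dmap_single (i : SVIx) :
    Dmap K a a' b b' c c' (Finsupp.single i 1) = dval K a a' b b' c c' i := by
  simp [Dmap, LinearMap.toSpanSingleton_apply]

lemma tensorCoeff_Dmap_Lb {n : ℤ} (hn : n ≠ 0) :
    tensorCoeff (ixM 0) (ixM n) (Dmap K a a' b b' c c' (Lb K n)) = n * a + c := by
  simp [Lb, Mb, Dmap_single, dval, hn, Ne.symm hn]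

lemma tensorCoeff_Dmap_Mb {n : ℤ} (hn : n ≠ 0) :
    tensorCoeff (ixM 0) (ixM n) (Dmap K a a' b b' c c' (Mb K n)) = 2 * b := by
  simp [Mb, Dmap_single, dval, hn, Ne.symm hn]

lemma tau_adVb (x : SVL K) (v : VV K) : tau K (adVb K x v) = adVb K x (tau K v) := by
  induction v using TensorProduct.induction_on with
  | zero => simp
  | tmul y z => simp [tau, adVb_apply, add_comm]
  | add y z hy hz => simp only [map_add, hy, hz]

lemma tau_Dmap (x : SVL K) : tau K (Dmap K a a' b b' c c' x) = Dmap K a' a b' b c' c x := by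
  induction x using Finsupp.induction_linear with
  | zero => simp
  | add y z hy hz => simp only [map_add, hy, hz]
  | single i t =>
    rw [← Finsupp.smul_single_one, map_smul, map_smul, map_smul, Dmap_single, Dmap_single]
    rcases i with m | m | m <;> simp [tau, dval, add_comm]

lemma Dmap_zero : Dmap K 0 0 0 0 0 0 = 0 :=
  Finsupp.lhom_ext fun i t => by rcases i with m | m | m <;> simp [Dmap, dval]

lemma params_eq_zero_of_Dmap_eq_adVb [CharZero K] {v : VV K}
    (hv : ∀ x, Dmap K a a' b b' c c' x = adVb K x v) : a = 0 ∧ b = 0 ∧ c = 0 := by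
  have hL : ∀ᶠ n : ℤ in cofinite, (n : K) * a + c = 0 := by
    filter_upwards [eventually_tensorCoeff_eq_zero (p := fun n => (ixM (-n), ixM n))
      (fun m n h => by simpa using congrArg Prod.snd h) v, eventually_cofinite_ne 0]
      with n hcoeff hn
    rw [← tensorCoeff_Dmap_Lb K hn, hv, tensorCoeff_adVb_Lb, hcoeff, mul_zero]
  have hM : ∀ᶠ n : ℤ in cofinite, (n : K) * tensorCoeff (ixM 0) (ixL 0) v + 2 * b = 0 := by
    filter_upwards [eventually_tensorCoeff_eq_zero (p := fun n => (ixL (-n), ixM n))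
      (fun m n h => by simpa using congrArg Prod.snd h) v, eventually_cofinite_ne 0]
      with n hcoeff hn
    rw [← tensorCoeff_Dmap_Mb K hn, hv, tensorCoeff_adVb_Mb, hcoeff]
    ring
  obtain ⟨ha, hc⟩ := eq_zero_of_eventually_intCast_mul_add_eq_zero hL
  obtain ⟨-, hb⟩ := eq_zero_of_eventually_intCast_mul_add_eq_zero hM
  exact ⟨ha, by simpa using hb, hc⟩

end SchrodingerVirasoro

/-- No nonzero element of the six-parameter family `Dmap` is an inner derivation:
`Inn(L, L⊗L) ∩ 𝒟 = 0`. -/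
theorem sv_inn_inter_D_eq_bot :
    ∀ (a a' b b' c c' : F) (v : VV F),
      (∀ x : SVL F, Dmap F a a' b b' c c' x = adVb F x v) →
      Dmap F a a' b b' c c' = 0 := by
  intro a a' b b' c c' v hv
  have hv' : ∀ x, Dmap F a' a b' b c' c x = adVb F x (tau F v) := fun x => by
    rw [← tau_Dmap, hv, tau_adVb]
  obtain ⟨rfl, rfl, rfl⟩ := params_eq_zero_of_Dmap_eq_adVb F hv
  obtain ⟨rfl, rfl, rfl⟩ := params_eq_zero_of_Dmap_eq_adVb F hv'
  exact Dmap_zero F
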